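/- Let C be a positive integer, fix c ∈ {1,…,C}, let θ ∈ (0,1), and for each l ∈ {1,…,C} let A_l ∈ ℂ^{K_l×N}. Let D_c ∈ ℂ^{K_c×K_c} with ‖D_c‖_F² ≤ ‖A_c‖_F². Let β_c = 1 and β_l = √((1−θ)/θ) for l ≠ c, let H^eff ∈ ℂ^{K×N} (K = Σ_l K_l) be the vertical stack of the blocks β_l A_l, and let D̃ be the matrix whose block row c equals D_c and whose other block rows are zero. Let P^w > 0, P^max > 0, λ° > 0, suppose (H^eff)ᴴH^eff + λ°I_N is invertible, and suppose V° = √(P^w)((H^eff)ᴴH^eff + λ°I_N)⁻¹(H^eff)ᴴD̃ satisfies ‖V°‖_F² = P^max. Then λ° ≤ ‖H^eff‖_F² · √(N · P^w / P^max). (Paper's Proposition 2: the optimal Lagrange multiplier of the per-cell weighted problem lies in the interval (0, ‖H_c^eff‖_F² √(N_c P_c^w / P_c^max)].) -/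

import Mathlib

/-!
Write `M = HᴴH + λI` and `X = M⁻¹HᴴD̃`, so that `V° = √P^w X` and `P^max = P^w ‖X‖_F²`.
Expanding `‖MX‖_F² = ‖HᴴHX‖_F² + 2λ‖HX‖_F² + λ²‖X‖_F²` gives
`λ‖X‖_F ≤ ‖MX‖_F = ‖HᴴD̃‖_F ≤ ‖H‖_F ‖D_c‖_F ≤ ‖H‖_F²`, where the last step uses that `A_c` is the
block of `H` with weight `β_c = 1`. Hence `λ ≤ ‖H‖_F² √(P^w / P^max)`; the factor `√N` is slack,
as `X ≠ 0` forces `N ≥ 1`.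
-/

open Matrix BigOperators

/-- Squared Frobenius norm of a complex matrix. -/
noncomputable def frobSq {m n : Type*} [Fintype m] [Fintype n] (A : Matrix m n ℂ) : ℝ :=
  ∑ i, ∑ j, ‖A i j‖ ^ 2

open scoped Matrix.Norms.Frobenius

section
variable {k m n ι : Type*} [Fintype k] [Fintype m] [Fintype n] [Fintype ι]

lemma frobSq_eq_norm_sq (A : Matrix m n ℂ) : frobSq A = ‖A‖ ^ 2 := by
  rw [frobenius_norm_def, ← Real.sqrt_eq_rpow, Real.sq_sqrt (by positivity), frobSq]
  simp only [Real.rpow_two]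

lemma frobSq_nonneg (A : Matrix m n ℂ) : 0 ≤ frobSq A := by
  rw [frobSq_eq_norm_sq]; positivity

lemma frobSq_conjTranspose (A : Matrix m n ℂ) : frobSq Aᴴ = frobSq A := by
  simp only [frobSq_eq_norm_sq, frobenius_norm_conjTranspose]

lemma frobSq_mul_le (A : Matrix k m ℂ) (B : Matrix m n ℂ) :
    frobSq (A * B) ≤ frobSq A * frobSq B := by
  simp only [frobSq_eq_norm_sq, ← mul_pow]
  exact pow_le_pow_left₀ (norm_nonneg _) (frobenius_norm_mul A B) 2

lemma frobSq_smul (r : ℂ) (A : Matrix m n ℂ) : frobSq (r • A) = ‖r‖ ^ 2 * frobSq A := by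
  simp [frobSq, mul_pow, Finset.mul_sum]

lemma frobSq_eq_re_trace (A : Matrix m n ℂ) : frobSq A = (Aᴴ * A).trace.re := by
  rw [frobSq, Finset.sum_comm]
  simp [Matrix.trace, Matrix.mul_apply, Complex.conj_mul', ← Complex.ofReal_pow]

lemma frobSq_add (A B : Matrix m n ℂ) :
    frobSq (A + B) = frobSq A + frobSq B + 2 * (Aᴴ * B).trace.re := by
  have : (Bᴴ * A).trace.re = (Aᴴ * B).trace.re := by
    rw [← Matrix.conjTranspose_conjTranspose (Bᴴ * A), Matrix.trace_conjTranspose,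
      Matrix.conjTranspose_mul, Matrix.conjTranspose_conjTranspose]
    simp
  simp only [frobSq_eq_re_trace, Matrix.conjTranspose_add, Matrix.add_mul, Matrix.mul_add,
    Matrix.trace_add, Complex.add_re, this]
  ring

lemma sq_mul_frobSq_le_frobSq_gram_add_smul_mul [DecidableEq n] (H : Matrix k n ℂ)
    (X : Matrix n m ℂ) {lam : ℝ} (hlam : 0 ≤ lam) :
    lam ^ 2 * frobSq X ≤ frobSq ((Hᴴ * H + (lam : ℂ) • 1) * X) := by
  have hcross : ((Hᴴ * H * X)ᴴ * ((lam : ℂ) • X)).trace.re = lam * frobSq (H * X) := by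
    rw [frobSq_eq_re_trace, Matrix.mul_smul, Matrix.trace_smul, smul_eq_mul, Complex.re_ofReal_mul]
    simp only [Matrix.conjTranspose_mul, Matrix.conjTranspose_conjTranspose, Matrix.mul_assoc]
  rw [Matrix.add_mul, Matrix.smul_mul, Matrix.one_mul, frobSq_add, hcross, frobSq_smul,
    Complex.norm_real, Real.norm_eq_abs, sq_abs]
  nlinarith [frobSq_nonneg (Hᴴ * H * X), frobSq_nonneg (H * X)]

lemma frobSq_eq_sum_blocks {κ : ι → Type*} [∀ l, Fintype (κ l)] (M : Matrix (Σ l, κ l) n ℂ) :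
    frobSq M = ∑ l, frobSq (of fun i j => M ⟨l, i⟩ j : Matrix (κ l) n ℂ) := by
  simp only [frobSq, of_apply, Fintype.sum_sigma]

lemma frobSq_block_le {κ : ι → Type*} [∀ l, Fintype (κ l)] (M : Matrix (Σ l, κ l) n ℂ) (c : ι) :
    frobSq (of fun i j => M ⟨c, i⟩ j : Matrix (κ c) n ℂ) ≤ frobSq M := by
  rw [frobSq_eq_sum_blocks M]
  exact Finset.single_le_sum (f := fun l => frobSq (of fun i j => M ⟨l, i⟩ j : Matrix (κ l) n ℂ))
    (fun _ _ => frobSq_nonneg _) (Finset.mem_univ c)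

lemma frobSq_single_block [DecidableEq ι] (Kl : ι → ℕ) (c : ι)
    (D : Matrix (Fin (Kl c)) n ℂ) :
    frobSq (of fun (p : Σ l, Fin (Kl l)) j =>
      if h : p.1 = c then D (Fin.cast (congrArg Kl h) p.2) j else 0) = frobSq D := by
  rw [frobSq_eq_sum_blocks (κ := fun l => Fin (Kl l)), Finset.sum_eq_single c]
  · simp [frobSq]
  · intro l _ hl
    simp [frobSq, hl]
  · simp

lemma le_mul_sqrt_of_sq_mul_le {lam F P Q n : ℝ} (hF : 0 ≤ F) (hP : 0 < P) (hn : 1 ≤ n)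
    (h : lam ^ 2 * P ≤ Q * F ^ 2) : lam ≤ F * Real.sqrt (n * Q / P) := by
  rw [← Real.sqrt_sq hF, ← Real.sqrt_mul (sq_nonneg F)]
  refine Real.le_sqrt_of_sq_le ?_
  rw [← mul_div_assoc, le_div_iff₀ hP]
  nlinarith [mul_le_mul_of_nonneg_right hn (le_trans (by positivity) h : 0 ≤ Q * F ^ 2)]

end

theorem stmt16_general (C N : ℕ) (c : Fin C)
    (Kl : Fin C → ℕ) (A : ∀ l : Fin C, Matrix (Fin (Kl l)) (Fin N) ℂ)
    (Dc : Matrix (Fin (Kl c)) (Fin (Kl c)) ℂ)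
    (hDc : frobSq Dc ≤ frobSq (A c))
    (β : Fin C → ℝ) (hβc : β c = 1)
    (Heff : Matrix ((l : Fin C) × Fin (Kl l)) (Fin N) ℂ)
    (hHeff : Heff = Matrix.of fun p j => (β p.1 : ℂ) * A p.1 p.2 j)
    (Dt : Matrix ((l : Fin C) × Fin (Kl l)) (Fin (Kl c)) ℂ)
    (hDt : Dt = Matrix.of fun p j =>
      if h : p.1 = c then Dc (Fin.cast (congrArg Kl h) p.2) j else 0)
    (Pw Pmax lam : ℝ) (hPw : 0 < Pw) (hPmax : 0 < Pmax) (hlam : 0 < lam)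
    (hinv : IsUnit (Heffᴴ * Heff + (lam : ℂ) • (1 : Matrix (Fin N) (Fin N) ℂ)))
    (hV : frobSq ((Real.sqrt Pw : ℂ) •
        ((Heffᴴ * Heff + (lam : ℂ) • (1 : Matrix (Fin N) (Fin N) ℂ))⁻¹ * Heffᴴ * Dt))
      = Pmax) :
    lam ≤ frobSq Heff * Real.sqrt ((N : ℝ) * Pw / Pmax) := by
  set M := Heffᴴ * Heff + (lam : ℂ) • (1 : Matrix (Fin N) (Fin N) ℂ)
  set X := M⁻¹ * Heffᴴ * Dt
  have hMX : M * X = Heffᴴ * Dt := by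
    rw [show X = M⁻¹ * (Heffᴴ * Dt) from Matrix.mul_assoc _ _ _,
      mul_nonsing_inv_cancel_left _ _ ((isUnit_iff_isUnit_det M).mp hinv)]
  have hPmax_eq : Pmax = Pw * frobSq X := by
    rw [← hV, frobSq_smul, Complex.norm_real, Real.norm_eq_abs, sq_abs, Real.sq_sqrt hPw.le]
  have hAc : frobSq (A c) ≤ frobSq Heff := by
    convert frobSq_block_le Heff c using 2
    ext i j
    simp [hHeff, hβc]
  have hN : (1 : ℝ) ≤ N := by
    rcases N with _ | N
    · simp [hPmax_eq, X, frobSq] at hPmax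
    · simp
  have hbound : lam ^ 2 * frobSq X ≤ frobSq Heff ^ 2 := calc
    lam ^ 2 * frobSq X ≤ frobSq (M * X) :=
      sq_mul_frobSq_le_frobSq_gram_add_smul_mul Heff X hlam.le
    _ ≤ frobSq Heffᴴ * frobSq Dt := hMX ▸ frobSq_mul_le _ _
    _ ≤ frobSq Heff ^ 2 := by
      rw [frobSq_conjTranspose, hDt, frobSq_single_block, sq]
      exact mul_le_mul_of_nonneg_left (hDc.trans hAc) (frobSq_nonneg _)
  refine le_mul_sqrt_of_sq_mul_le (frobSq_nonneg _) hPmax hN ?_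
  rw [hPmax_eq]
  linear_combination mul_le_mul_of_nonneg_left hbound hPw.le

/-- Paper's Proposition 2: the optimal Lagrange multiplier of the per-cell
weighted problem satisfies `λ° ≤ ‖H^eff‖_F² √(N P^w / P^max)`, where `H^eff`
is the effective channel (vertical stack of `β_l A_l`) and `D̃` is the
effective demand (block row `c` equals `D_c`, other block rows zero). -/
theorem stmt16 (C N : ℕ) (hC : 0 < C) (c : Fin C)
    (θ : ℝ) (hθ0 : 0 < θ) (hθ1 : θ < 1)
    (Kl : Fin C → ℕ) (A : ∀ l : Fin C, Matrix (Fin (Kl l)) (Fin N) ℂ)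
    (Dc : Matrix (Fin (Kl c)) (Fin (Kl c)) ℂ)
    (hDc : frobSq Dc ≤ frobSq (A c))
    (β : Fin C → ℝ) (hβc : β c = 1)
    (hβ : ∀ l : Fin C, l ≠ c → β l = Real.sqrt ((1 - θ) / θ))
    (Heff : Matrix ((l : Fin C) × Fin (Kl l)) (Fin N) ℂ)
    (hHeff : Heff = Matrix.of fun p j => (β p.1 : ℂ) * A p.1 p.2 j)
    (Dt : Matrix ((l : Fin C) × Fin (Kl l)) (Fin (Kl c)) ℂ)
    (hDt : Dt = Matrix.of fun p j =>
      if h : p.1 = c then Dc (Fin.cast (congrArg Kl h) p.2) j else 0)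
    (Pw Pmax lam : ℝ) (hPw : 0 < Pw) (hPmax : 0 < Pmax) (hlam : 0 < lam)
    (hinv : IsUnit (Heffᴴ * Heff + (lam : ℂ) • (1 : Matrix (Fin N) (Fin N) ℂ)))
    (hV : frobSq ((Real.sqrt Pw : ℂ) •
        ((Heffᴴ * Heff + (lam : ℂ) • (1 : Matrix (Fin N) (Fin N) ℂ))⁻¹ * Heffᴴ * Dt))
      = Pmax) :
    lam ≤ frobSq Heff * Real.sqrt ((N : ℝ) * Pw / Pmax) :=
  stmt16_general C N c Kl A Dc hDc β hβc Heff hHeff Dt hDt Pw Pmax lam hPw hPmax hlam hinv hV
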